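/- Let q ∈ (0,1) and let ν ∈ ℂ not be a negative integer. For every z ∈ ℂ with z ≠ 0, the Hahn–Exton q-Bessel function satisfies the second order q-difference equation q^{ν/2} ( J_ν(q^{1/2} z;q) + J_ν(q^{−1/2} z;q) ) = (1 + q^ν − z²) · J_ν(z;q). -/
import Mathlib


open Complex Filter

noncomputable def qPoch (q a : ℂ) (k : ℕ) : ℂ := ∏ i ∈ Finset.range k, (1 - a * q ^ i)

noncomputable def qPochInf (q a : ℂ) : ℂ := ∏' i : ℕ, (1 - a * q ^ i)

noncomputable def Jser (q : ℝ) (ν z : ℂ) : ℂ :=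
  z ^ ν * (qPochInf (q : ℂ) ((q : ℂ) ^ (ν + 1)) / qPochInf (q : ℂ) (q : ℂ)) *
    ∑' k : ℕ, ((-1 : ℂ) ^ k * (q : ℂ) ^ (k * (k + 1) / 2) * z ^ (2 * k)) /
      (qPoch (q : ℂ) (q : ℂ) k * qPoch (q : ℂ) ((q : ℂ) ^ (ν + 1)) k)

open scoped Classical in
noncomputable def JHE (q : ℝ) (ν z : ℂ) : ℂ :=
  if h : ∃ n : ℕ, ν = -((n : ℂ) + 1) then
    let n : ℕ := h.choose + 1
    (-1 : ℂ) ^ n * (q : ℂ) ^ ((n : ℂ) / 2) * Jser q (n : ℂ) (z * (q : ℂ) ^ ((n : ℂ) / 2))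
  else Jser q ν z

/-- A tprod with a zero factor is zero. -/
lemma tprod_eq_zero_aux (f : ℕ → ℂ) (j : ℕ) (hj : f j = 0) : ∏' i, f i = 0 := by
  have h : HasProd f 0 := by
    rw [HasProd]
    have hev : ∀ᶠ s : Finset ℕ in atTop, (∏ i ∈ s, f i) = 0 := by
      filter_upwards [Filter.eventually_ge_atTop ({j} : Finset ℕ)] with s hs
      exact Finset.prod_eq_zero (hs (Finset.mem_singleton_self j)) hj
    exact Tendsto.congr' (EventuallyEq.symm hev) tendsto_const_nhds
  exact h.tprod_eq

lemma qPoch_succ (q a : ℂ) (k : ℕ) :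
    qPoch q a (k + 1) = qPoch q a k * (1 - a * q ^ k) := Finset.prod_range_succ _ _

lemma nat_tri (k : ℕ) : (k + 1) * (k + 1 + 1) / 2 = k * (k + 1) / 2 + (k + 1) := by
  have h1 : k * (k + 1) / 2 * 2 = k * (k + 1) := Nat.div_two_mul_two_of_even (Nat.even_mul_succ_self k)
  have h2 : (k + 1) * (k + 1 + 1) / 2 * 2 = (k + 1) * (k + 1 + 1) :=
    Nat.div_two_mul_two_of_even (Nat.even_mul_succ_self (k + 1))
  have h3 : (k + 1) * (k + 1 + 1) = k * (k + 1) + 2 * (k + 1) := by ring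
  omega

lemma qPoch_q_ne_zero {q : ℝ} (hq0 : 0 < q) (hq1 : q < 1) (k : ℕ) :
    qPoch (q : ℂ) (q : ℂ) k ≠ 0 := by
  rw [qPoch]
  apply Finset.prod_ne_zero_iff.mpr
  intro i _ h
  rw [sub_eq_zero] at h
  have h' : ((q * q ^ i : ℝ) : ℂ) = ((1 : ℝ) : ℂ) := by push_cast; exact h.symm
  have h'' : q * q ^ i = 1 := by exact_mod_cast h'
  have hlt : q ^ (i + 1) < 1 := pow_lt_one₀ hq0.le hq1 (Nat.succ_ne_zero i)
  rw [pow_succ] at hlt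
  nlinarith

lemma one_sub_q_pow_ne_zero {q : ℝ} (hq0 : 0 < q) (hq1 : q < 1) (k : ℕ) :
    (1 : ℂ) - (q : ℂ) * (q : ℂ) ^ k ≠ 0 := by
  intro h
  rw [sub_eq_zero] at h
  have h' : ((q * q ^ k : ℝ) : ℂ) = ((1 : ℝ) : ℂ) := by push_cast; exact h.symm
  have h'' : q * q ^ k = 1 := by exact_mod_cast h'
  have hlt : q ^ (k + 1) < 1 := pow_lt_one₀ hq0.le hq1 (Nat.succ_ne_zero k)
  rw [pow_succ] at hlt
  nlinarith

lemma qPoch_w_ne_zero {q : ℝ} {w : ℂ} (hB : ∀ i : ℕ, w * (q : ℂ) ^ i ≠ 1) (k : ℕ) :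
    qPoch (q : ℂ) w k ≠ 0 := by
  rw [qPoch]
  apply Finset.prod_ne_zero_iff.mpr
  intro i _
  exact sub_ne_zero_of_ne (fun h => hB i h.symm)

lemma summable_F {q : ℝ} (hq0 : 0 < q) (hq1 : q < 1) {w : ℂ}
    (hB : ∀ i : ℕ, w * (q : ℂ) ^ i ≠ 1) (u : ℂ) :
    Summable (fun k : ℕ => ((-1 : ℂ) ^ k * (q : ℂ) ^ (k * (k + 1) / 2) * u ^ (2 * k)) /
      (qPoch (q : ℂ) (q : ℂ) k * qPoch (q : ℂ) w k)) := by
  set F := fun k : ℕ => ((-1 : ℂ) ^ k * (q : ℂ) ^ (k * (k + 1) / 2) * u ^ (2 * k)) /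
      (qPoch (q : ℂ) (q : ℂ) k * qPoch (q : ℂ) w k) with hF
  have hnq : ‖(q : ℂ)‖ = q := by
    rw [Complex.norm_real, Real.norm_of_nonneg hq0.le]
  apply summable_of_ratio_norm_eventually_le (r := 1/2) (by norm_num)
  have ht : Tendsto (fun k : ℕ => q ^ k) atTop (nhds 0) :=
    tendsto_pow_atTop_nhds_zero_of_lt_one hq0.le hq1
  have hε : (0 : ℝ) < min (1/2) (min (1/(2*(‖w‖+1))) (1/(8*(‖u‖^2+1)))) := by positivity
  filter_upwards [ht.eventually_lt_const hε] with k hk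
  have hk1 : q ^ k < 1/2 := lt_of_lt_of_le hk (le_trans (min_le_left _ _) le_rfl)
  have hk2 : q ^ k < 1/(2*(‖w‖+1)) :=
    lt_of_lt_of_le hk (le_trans (min_le_right _ _) (min_le_left _ _))
  have hk3 : q ^ k < 1/(8*(‖u‖^2+1)) :=
    lt_of_lt_of_le hk (le_trans (min_le_right _ _) (min_le_right _ _))
  have hqk : (0:ℝ) < q ^ k := pow_pos hq0 k
  have hd1 : (1 : ℂ) - (q : ℂ) * (q : ℂ) ^ k ≠ 0 := one_sub_q_pow_ne_zero hq0 hq1 k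
  have hd2 : (1 : ℂ) - w * (q : ℂ) ^ k ≠ 0 := sub_ne_zero_of_ne (fun h => hB k h.symm)
  have hrec : F (k+1) = F k *
      ((-((q : ℂ) * (q : ℂ) ^ k) * u ^ 2) / ((1 - (q : ℂ) * (q : ℂ) ^ k) * (1 - w * (q : ℂ) ^ k))) := by
    have e1 : (-1 : ℂ) ^ (k+1) = (-1) ^ k * (-1) := pow_succ _ _
    have e2 : (q : ℂ) ^ ((k+1) * (k+1+1) / 2) = (q : ℂ) ^ (k * (k+1) / 2) * ((q:ℂ) * (q:ℂ) ^ k) := by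
      rw [nat_tri, pow_add, pow_succ]; ring
    have e3 : u ^ (2 * (k+1)) = u ^ (2*k) * u ^ 2 := by
      rw [show 2*(k+1) = 2*k+2 by ring, pow_add]
    rw [hF]
    simp only
    rw [qPoch_succ, qPoch_succ, e1, e2, e3]
    field_simp [qPoch_q_ne_zero hq0 hq1 k, qPoch_w_ne_zero hB k, hd1, hd2]
  rw [hrec, norm_mul, mul_comm (1/2 : ℝ)]
  apply mul_le_mul_of_nonneg_left _ (norm_nonneg _)
  rw [norm_div, norm_mul, norm_neg, norm_mul, norm_pow, norm_pow, hnq, norm_mul]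
  have hnw : (0:ℝ) ≤ ‖w‖ := norm_nonneg w
  have hn1 : (1:ℝ)/2 ≤ ‖(1 : ℂ) - (q : ℂ) * (q : ℂ) ^ k‖ := by
    have h := norm_sub_norm_le (1 : ℂ) ((q : ℂ) * (q : ℂ) ^ k)
    rw [norm_one, norm_mul, norm_pow, hnq] at h
    nlinarith
  have hn2 : (1:ℝ)/2 ≤ ‖(1 : ℂ) - w * (q : ℂ) ^ k‖ := by
    have h := norm_sub_norm_le (1 : ℂ) (w * (q : ℂ) ^ k)
    rw [norm_one, norm_mul, norm_pow, hnq] at h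
    have hpos : (0:ℝ) < ‖w‖ + 1 := by positivity
    have h1 : ‖w‖ * q ^ k ≤ (‖w‖ + 1) * q ^ k := by nlinarith
    have h2 : (‖w‖ + 1) * q ^ k < (‖w‖ + 1) * (1/(2*(‖w‖+1))) :=
      mul_lt_mul_of_pos_left hk2 hpos
    have h3 : (‖w‖ + 1) * (1/(2*(‖w‖+1))) = 1/2 := by field_simp
    linarith
  have hnum : q * q ^ k * ‖u‖ ^ 2 ≤ 1/8 := by
    have hu2 : (0:ℝ) ≤ ‖u‖^2 := sq_nonneg _
    have hupos : (0:ℝ) < ‖u‖^2 + 1 := by positivity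
    have h1 : q * q ^ k ≤ q ^ k := by nlinarith
    have h1' : q * q ^ k * ‖u‖^2 ≤ q ^ k * ‖u‖^2 :=
      mul_le_mul_of_nonneg_right h1 hu2
    have h2 : q ^ k * ‖u‖ ^ 2 ≤ q ^ k * (‖u‖^2 + 1) := by nlinarith
    have h3 : q ^ k * (‖u‖^2 + 1) < (1/(8*(‖u‖^2+1))) * (‖u‖^2+1) :=
      mul_lt_mul_of_pos_right hk3 hupos
    have h4 : (1/(8*(‖u‖^2+1))) * (‖u‖^2+1) = 1/8 := by field_simp
    linarith
  have hden : (1:ℝ)/4 ≤ ‖(1 : ℂ) - (q : ℂ) * (q : ℂ) ^ k‖ * ‖(1 : ℂ) - w * (q : ℂ) ^ k‖ := by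
    nlinarith [norm_nonneg ((1 : ℂ) - (q : ℂ) * (q : ℂ) ^ k), norm_nonneg ((1 : ℂ) - w * (q : ℂ) ^ k)]
  calc q * q ^ k * ‖u‖ ^ 2 / (‖(1 : ℂ) - (q : ℂ) * (q : ℂ) ^ k‖ * ‖(1 : ℂ) - w * (q : ℂ) ^ k‖)
      ≤ (1/8) / (1/4) := by
        apply div_le_div₀ (by norm_num) hnum (by norm_num) hden
    _ = 1/2 := by norm_num

/-- The second order q-difference equation for the Hahn–Exton q-Bessel function. -/
theorem q_bessel_difference_equation
    (q : ℝ) (hq0 : 0 < q) (hq1 : q < 1) (ν : ℂ)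
    (hν : ¬∃ n : ℕ, ν = -((n : ℂ) + 1)) (z : ℂ) (hz : z ≠ 0) :
    (q : ℂ) ^ (ν / 2) *
        (JHE q ν (((q ^ ((1 : ℝ) / 2) : ℝ) : ℂ) * z) +
          JHE q ν (((q ^ (-(1 : ℝ) / 2) : ℝ) : ℂ) * z)) =
      (1 + (q : ℂ) ^ ν - z ^ 2) * JHE q ν z := by
  have hQ0 : (q : ℂ) ≠ 0 := by
    simp only [ne_eq, Complex.ofReal_eq_zero]; exact ne_of_gt hq0
  simp only [JHE, dif_neg hν]
  by_cases hA : ∃ i : ℕ, (q : ℂ) ^ (ν + 1) * (q : ℂ) ^ i = 1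
  · obtain ⟨i, hi⟩ := hA
    have hP : qPochInf (q : ℂ) ((q : ℂ) ^ (ν + 1)) = 0 := by
      apply tprod_eq_zero_aux _ i
      rw [hi, sub_self]
    simp [Jser, hP]
  · push_neg at hA
    set w : ℂ := (q : ℂ) ^ (ν + 1) with hw
    -- basic power facts
    set c₁ : ℂ := ((q ^ ((1 : ℝ) / 2) : ℝ) : ℂ) with hc1def
    set c₂ : ℂ := ((q ^ (-(1 : ℝ) / 2) : ℝ) : ℂ) with hc2def
    have hc1Q : c₁ = (q : ℂ) ^ (((1:ℝ)/2 : ℂ)) := by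
      rw [hc1def, Complex.ofReal_cpow hq0.le]
      norm_num
    have hc2Q : c₂ = (q : ℂ) ^ ((-(1:ℝ)/2 : ℂ)) := by
      rw [hc2def, Complex.ofReal_cpow hq0.le]; norm_num
    have hc1sq : c₁ ^ 2 = (q : ℂ) := by
      rw [hc1def, ← Complex.ofReal_pow, ← Real.rpow_natCast (q ^ ((1:ℝ)/2)) 2,
        ← Real.rpow_mul hq0.le]
      norm_num
    have hc2sq : c₂ ^ 2 = (q : ℂ)⁻¹ := by
      rw [hc2def, ← Complex.ofReal_pow, ← Real.rpow_natCast (q ^ (-(1:ℝ)/2)) 2,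
        ← Real.rpow_mul hq0.le]
      norm_num
      rw [Real.rpow_neg_one, Complex.ofReal_inv]
    have hc1ne : c₁ ≠ 0 := by
      rw [hc1def]
      simp only [ne_eq, Complex.ofReal_eq_zero]
      positivity
    have hc2ne : c₂ ≠ 0 := by
      rw [hc2def]
      simp only [ne_eq, Complex.ofReal_eq_zero]
      positivity
    have hlogim : (Complex.log (q : ℂ)).im = 0 := by
      rw [Complex.log_im, Complex.arg_ofReal_of_nonneg hq0.le]
    -- (c * z)^ν = c^ν * z^ν for positive real c
    have hmulpow : ∀ c : ℂ, c ≠ 0 → c.im = 0 → 0 < c.re → (c * z) ^ ν = c ^ ν * z ^ ν := by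
      intro c hc him hre
      have hcz : c * z ≠ 0 := mul_ne_zero hc hz
      rw [Complex.cpow_def_of_ne_zero hcz, Complex.cpow_def_of_ne_zero hc,
        Complex.cpow_def_of_ne_zero hz, ← Complex.exp_add, ← add_mul]
      congr 1
      have : c = ((c.re : ℝ) : ℂ) := by
        apply Complex.ext <;> simp [him]
      rw [this, Complex.log_ofReal_mul hre hz, Complex.ofReal_log hre.le]
    have hcpow_half : ∀ (r : ℂ), ((q : ℂ) ^ r) ^ ν = (q : ℂ) ^ (r * ν) → True := fun _ _ => trivial
    have hpow1 : (q : ℂ) ^ (ν / 2) * c₁ ^ ν = (q : ℂ) ^ ν := by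
      rw [hc1Q, ← Complex.cpow_mul]
      · rw [← Complex.cpow_add _ _ hQ0]
        congr 1
        push_cast
        ring
      · simp [Complex.mul_im, hlogim]
        positivity
      · simp [Complex.mul_im, hlogim]
        positivity
    have hpow2 : (q : ℂ) ^ (ν / 2) * c₂ ^ ν = 1 := by
      rw [hc2Q, ← Complex.cpow_mul]
      · rw [← Complex.cpow_add _ _ hQ0]
        have : ν / 2 + (-(1:ℝ)/2 : ℂ) * ν = 0 := by push_cast; ring
        rw [this, Complex.cpow_zero]
      · simp [Complex.mul_im, hlogim]
        positivity
      · simp [Complex.mul_im, hlogim]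
        positivity
    -- the series
    set g : ℕ → ℂ := fun k => ((-1 : ℂ) ^ k * (q : ℂ) ^ (k * (k + 1) / 2) * z ^ (2 * k)) /
      (qPoch (q : ℂ) (q : ℂ) k * qPoch (q : ℂ) w k) with hg
    have hSg : Summable g := summable_F hq0 hq1 hA z
    have hterm1 : ∀ k : ℕ, ((-1 : ℂ) ^ k * (q : ℂ) ^ (k * (k + 1) / 2) * (c₁ * z) ^ (2 * k)) /
        (qPoch (q : ℂ) (q : ℂ) k * qPoch (q : ℂ) w k) = (q : ℂ) ^ k * g k := by
      intro k
      have : (c₁ * z) ^ (2 * k) = (q : ℂ) ^ k * z ^ (2 * k) := by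
        rw [pow_mul, mul_pow, hc1sq, mul_pow, ← pow_mul]
      rw [this, hg]
      ring
    have hterm2 : ∀ k : ℕ, ((-1 : ℂ) ^ k * (q : ℂ) ^ (k * (k + 1) / 2) * (c₂ * z) ^ (2 * k)) /
        (qPoch (q : ℂ) (q : ℂ) k * qPoch (q : ℂ) w k) = ((q : ℂ)⁻¹) ^ k * g k := by
      intro k
      have : (c₂ * z) ^ (2 * k) = ((q : ℂ)⁻¹) ^ k * z ^ (2 * k) := by
        rw [pow_mul, mul_pow, hc2sq, mul_pow, ← pow_mul]
      rw [this, hg]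
      ring
    have hS1 : Summable (fun k : ℕ => (q : ℂ) ^ k * g k) :=
      (summable_F hq0 hq1 hA (c₁ * z)).congr hterm1
    have hS2 : Summable (fun k : ℕ => ((q : ℂ)⁻¹) ^ k * g k) :=
      (summable_F hq0 hq1 hA (c₂ * z)).congr hterm2
    -- the key recurrence
    set β : ℂ := (q : ℂ) ^ ν with hβ
    have hwq : w = β * (q : ℂ) := by
      rw [hw, hβ, Complex.cpow_add _ _ hQ0, Complex.cpow_one]
    set h : ℕ → ℂ := fun k => (1 + β - β * ((q:ℂ)^k) - ((q:ℂ)⁻¹)^k) * g k with hh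
    have hSh : Summable h := by
      apply Summable.congr (((hSg.mul_left (1 + β)).sub (hS1.mul_left β)).sub hS2)
      intro k
      rw [hh]
      ring
    have hshift : ∀ k : ℕ, h (k + 1) = z ^ 2 * g k := by
      intro k
      have hd1 : (1 : ℂ) - (q : ℂ) * (q : ℂ) ^ k ≠ 0 := one_sub_q_pow_ne_zero hq0 hq1 k
      have hd2 : (1 : ℂ) - β * (q : ℂ) * ((q : ℂ)) ^ k ≠ 0 := by
        have h' : (1 : ℂ) - w * (q : ℂ) ^ k ≠ 0 := sub_ne_zero_of_ne (fun hx => hA k hx.symm)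
        rw [hwq] at h'
        exact h'
      have hpw : qPoch (q : ℂ) (β * (q : ℂ)) k ≠ 0 := by
        rw [← hwq]; exact qPoch_w_ne_zero hA k
      have e1 : (-1 : ℂ) ^ (k+1) = (-1) ^ k * (-1) := pow_succ _ _
      have e2 : (q : ℂ) ^ ((k+1) * (k+1+1) / 2) = (q : ℂ) ^ (k * (k+1) / 2) * ((q:ℂ) * (q:ℂ) ^ k) := by
        rw [nat_tri, pow_add, pow_succ]; ring
      have e3 : z ^ (2 * (k+1)) = z ^ (2*k) * z ^ 2 := by
        rw [show 2*(k+1) = 2*k+2 by ring, pow_add]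
      have e4 : ((q : ℂ)⁻¹) ^ (k+1) = ((q:ℂ) * (q:ℂ) ^ k)⁻¹ := by
        rw [inv_pow, pow_succ, mul_comm]
      rw [hh, hg]
      simp only
      rw [qPoch_succ, qPoch_succ, e1, e2, e3, e4, hwq,
        show (q : ℂ) ^ (k+1) = (q:ℂ) * (q:ℂ) ^ k from by rw [pow_succ, mul_comm]]
      field_simp [qPoch_q_ne_zero hq0 hq1 k, hpw, hd1, hd2, pow_ne_zero k hQ0]
      ring
    have hh0 : h 0 = 0 := by
      rw [hh]
      simp
    have hkey : β * (∑' k, (q : ℂ) ^ k * g k) + (∑' k, ((q : ℂ)⁻¹) ^ k * g k)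
        = (1 + β - z ^ 2) * (∑' k, g k) := by
      have hsum_h : ∑' k, h k = z ^ 2 * ∑' k, g k := by
        rw [Summable.tsum_eq_zero_add hSh, hh0, zero_add, tsum_congr hshift, tsum_mul_left]
      have hsplit : ∑' k, h k = (1 + β) * (∑' k, g k) - β * (∑' k, (q : ℂ) ^ k * g k)
          - (∑' k, ((q : ℂ)⁻¹) ^ k * g k) := by
        have e : h = fun k => (((1 + β) * g k - β * ((q : ℂ) ^ k * g k))
            - ((q : ℂ)⁻¹) ^ k * g k) := by
          funext k
          rw [hh]; ring
        rw [e, Summable.tsum_sub ((hSg.mul_left (1 + β)).sub (hS1.mul_left β)) hS2,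
          Summable.tsum_sub (hSg.mul_left (1 + β)) (hS1.mul_left β), tsum_mul_left, tsum_mul_left]
      linear_combination hsplit - hsum_h
    -- put everything together
    simp only [Jser]
    rw [hmulpow c₁ hc1ne (by rw [hc1def]; simp) (by rw [hc1def]; simp; positivity),
      hmulpow c₂ hc2ne (by rw [hc2def]; simp) (by rw [hc2def]; simp; positivity)]
    rw [tsum_congr hterm1, tsum_congr hterm2]
    set C : ℂ := qPochInf (q : ℂ) w / qPochInf (q : ℂ) (q : ℂ) with hC
    set T0 : ℂ := ∑' k, g k
    set T1 : ℂ := ∑' k, (q : ℂ) ^ k * g k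
    set T2 : ℂ := ∑' k, ((q : ℂ)⁻¹) ^ k * g k
    linear_combination (z ^ ν * C * T1) * hpow1 + (z ^ ν * C * T2) * hpow2
      + (z ^ ν * C) * hkey
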